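/- Let s ∈ (1,2] and let p, p₁, p₂, ℓ ∈ ℝ with p ≤ s, p₁ ≤ s, p₂ ≤ s, ℓ ≤ s, 2p < p₁ + p₂ + ℓ and 2p + 1 < p₁ + p₂ + s. Let ε ≥ 0, T ≥ 2 and u₀ ≤ 1. Set ⟨u⟩ := √(1+u²) and r(t,u) := t + |u|. Let f, g : [2,T] × (−∞,u₀] → [0,∞) be measurable and assume: for every u ≤ u₀, ∫_2^T r(t,u)^{p₁} f(t,u)² dt ≤ ε² ⟨u⟩^{p₁−s}, and for every t ∈ [2,T], ∫_{−∞}^{u₀} r(t,u)^{p₂} g(t,u)² du ≤ ε² ⟨u₀⟩^{p₂−s}. Then there is a constant C depending only on s, p, p₁, p₂, ℓ such that ∫_{−∞}^{u₀} ∫_2^T r(t,u)^{p−(ℓ+1)/2} ⟨u⟩^{−(s−ℓ)/2} f(t,u) g(t,u) dt du ≤ C · ε² · ⟨u₀⟩^{p−s}. -/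

import Mathlib

/-!
Weighted AM–GM splits the integrand as
`r^{p-(ℓ+1)/2} ⟨u⟩^{-(s-ℓ)/2} f g ≤ X(u) · r^{p₁} f² + Y(t) · r^{p₂} g²`, where
the weight of `f` depends on `u` only and, thanks to `t ≤ r` and `⟨u⟩ ≤ r`, the weight of `g` can be
taken to depend on `t` only (it is `t^x` with `x < -1`). The `f`-part is integrated first in `t`
against the null-cone flux, leaving `∫_{-∞}^{u₀} ⟨u⟩^q du ≲ ⟨u₀⟩^{q+1}` with `q < -1`; by Tonelli
the `g`-part is integrated first in `u` against the hypersurface flux, leaving `∫_2^∞ t^x dt < ∞`.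
A factor `⟨u₀⟩^{±(p₂ - p)}` moved between the two weights balances the powers of `⟨u₀⟩`.
-/

open MeasureTheory Set Function

theorem lintegral_Ici_rpow_of_lt {q c : ℝ} (hq : q < -1) (hc : 0 < c) :
    ∫⁻ y in Ici c, ENNReal.ofReal (y ^ q) = ENNReal.ofReal (-c ^ (q + 1) / (q + 1)) := by
  rw [← setLIntegral_congr Ioi_ae_eq_Ici, ← integral_Ioi_rpow_of_lt hq hc,
    ofReal_integral_eq_lintegral_ofReal (integrableOn_Ioi_rpow_of_lt hq hc)]
  exact ae_restrict_of_forall_mem measurableSet_Ioi fun y hy => Real.rpow_nonneg (hc.trans hy).le q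

theorem lintegral_Iic_sub_rpow_of_lt {q c u₀ : ℝ} (hq : q < -1) (hu₀ : u₀ < c) :
    ∫⁻ u in Iic u₀, ENNReal.ofReal ((c - u) ^ q)
      = ENNReal.ofReal (-(c - u₀) ^ (q + 1) / (q + 1)) := by
  have hpre : (c - ·) ⁻¹' Ici (c - u₀) = Iic u₀ := by ext u; simp
  rw [← lintegral_Ici_rpow_of_lt hq (sub_pos.2 hu₀), ← hpre]
  exact (Measure.measurePreserving_sub_left volume c).setLIntegral_comp_preimage_emb
    (MeasurableEquiv.subLeft c).measurableEmbedding (fun y => ENNReal.ofReal (y ^ q)) _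

theorem one_le_sqrt_one_add_sq (u : ℝ) : 1 ≤ √(1 + u ^ 2) :=
  Real.one_le_sqrt.2 (by nlinarith [sq_nonneg u])

theorem sqrt_one_add_sq_le_add_abs {t : ℝ} (ht : 1 ≤ t) (u : ℝ) : √(1 + u ^ 2) ≤ t + |u| :=
  Real.sqrt_le_iff.2 ⟨by positivity, by nlinarith [sq_abs u, abs_nonneg u]⟩

theorem sqrt_one_add_sq_le_three_sub {u : ℝ} (hu : u ≤ 1) : √(1 + u ^ 2) ≤ 3 - u :=
  Real.sqrt_le_iff.2 ⟨by linarith, by nlinarith⟩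

theorem three_sub_div_four_le_sqrt_one_add_sq (u : ℝ) : (3 - u) / 4 ≤ √(1 + u ^ 2) :=
  Real.le_sqrt_of_sq_le (by nlinarith [sq_nonneg (u + 1/3)])

theorem lintegral_Iic_sqrt_one_add_sq_rpow_le {q u₀ : ℝ} (hq : q < -1) (hu₀ : u₀ ≤ 1) :
    ∫⁻ u in Iic u₀, ENNReal.ofReal (√(1 + u ^ 2) ^ q)
      ≤ ENNReal.ofReal (-4 ^ (-q) / (q + 1) * √(1 + u₀ ^ 2) ^ (q + 1)) := by
  have h4 : (0 : ℝ) ≤ 4 ^ (-q) := by positivity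
  have hC : 0 ≤ -4 ^ (-q) / (q + 1) := div_nonneg_of_nonpos (neg_nonpos.2 h4) (by linarith)
  calc ∫⁻ u in Iic u₀, ENNReal.ofReal (√(1 + u ^ 2) ^ q)
      ≤ ∫⁻ u in Iic u₀, ENNReal.ofReal (4 ^ (-q) * (3 - u) ^ q) := by
        refine setLIntegral_mono' measurableSet_Iic fun u hu => ENNReal.ofReal_le_ofReal ?_
        have h3u : 0 < 3 - u := by linarith [mem_Iic.1 hu]
        calc √(1 + u ^ 2) ^ q ≤ ((3 - u) / 4) ^ q :=
              Real.rpow_le_rpow_of_nonpos (by positivity)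
                (three_sub_div_four_le_sqrt_one_add_sq u) (by linarith)
          _ = 4 ^ (-q) * (3 - u) ^ q := by
              rw [Real.div_rpow h3u.le (by norm_num), Real.rpow_neg (by norm_num), div_eq_inv_mul]
    _ = ENNReal.ofReal (4 ^ (-q)) * ENNReal.ofReal (-(3 - u₀) ^ (q + 1) / (q + 1)) := by
        simp_rw [ENNReal.ofReal_mul h4]
        rw [lintegral_const_mul' _ _ ENNReal.ofReal_ne_top,
          lintegral_Iic_sub_rpow_of_lt hq (by linarith)]
    _ ≤ ENNReal.ofReal (-4 ^ (-q) / (q + 1) * √(1 + u₀ ^ 2) ^ (q + 1)) := by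
        rw [← ENNReal.ofReal_mul h4]
        refine ENNReal.ofReal_le_ofReal ?_
        calc 4 ^ (-q) * (-(3 - u₀) ^ (q + 1) / (q + 1))
            = -4 ^ (-q) / (q + 1) * (3 - u₀) ^ (q + 1) := by ring
          _ ≤ _ := mul_le_mul_of_nonneg_left (Real.rpow_le_rpow_of_nonpos (by positivity)
                (sqrt_one_add_sq_le_three_sub hu₀) (by linarith)) hC

theorem two_mul_mul_mul_le_of_sq_le {W X Y F G : ℝ} (hX : 0 ≤ X) (hY : 0 ≤ Y) (hF : 0 ≤ F)
    (hG : 0 ≤ G) (hW : W ^ 2 ≤ X * Y) : 2 * (W * F * G) ≤ X * F ^ 2 + Y * G ^ 2 := by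
  have hW' : W ≤ √X * √Y := by
    rw [← Real.sqrt_mul hX]
    exact (le_abs_self W).trans (Real.abs_le_sqrt hW)
  calc 2 * (W * F * G) = 2 * (W * (F * G)) := by ring
    _ ≤ 2 * (√X * √Y * (F * G)) := by gcongr
    _ = 2 * (√X * F) * (√Y * G) := by ring
    _ ≤ (√X * F) ^ 2 + (√Y * G) ^ 2 := two_mul_le_add_sq _ _
    _ = X * F ^ 2 + Y * G ^ 2 := by rw [mul_pow, mul_pow, Real.sq_sqrt hX, Real.sq_sqrt hY]

theorem rpow_mul_rpow_sub_le_rpow {t r A σ x : ℝ} (ht : 0 < t) (htr : t ≤ r) (hA : 0 < A)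
    (hAr : A ≤ r) (hσx : σ ≤ x) (hx : x ≤ 0) : r ^ σ * A ^ (x - σ) ≤ t ^ x := by
  have hr : 0 < r := ht.trans_le htr
  calc r ^ σ * A ^ (x - σ) ≤ r ^ σ * r ^ (x - σ) := by
        gcongr
    _ = r ^ x := by rw [← Real.rpow_add hr, add_sub_cancel]
    _ ≤ t ^ x := Real.rpow_le_rpow_of_nonpos ht htr hx

theorem rpow_mul_rpow_mul_mul_le {t r A c a b p₁ p₂ x κ F G : ℝ} (ht : 0 < t) (htr : t ≤ r)
    (hA : 0 < A) (hAr : A ≤ r) (hc : 0 < c) (hσx : 2 * a - p₁ - p₂ ≤ x) (hx : x ≤ 0)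
    (hF : 0 ≤ F) (hG : 0 ≤ G) :
    r ^ a * A ^ b * F * G
      ≤ A ^ (2 * b + 2 * a - p₁ - p₂ - x) * c ^ κ * (r ^ p₁ * F ^ 2)
        + t ^ x * c ^ (-κ) * (r ^ p₂ * G ^ 2) := by
  have hr : 0 < r := ht.trans_le htr
  set σ := 2 * a - p₁ - p₂
  set α := 2 * b + 2 * a - p₁ - p₂ - x
  have hsq : (r ^ a * A ^ b) ^ 2
      = (A ^ α * c ^ κ * r ^ p₁) * (r ^ p₂ * c ^ (-κ)) * (r ^ σ * A ^ (x - σ)) := by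
    have hcc : c ^ κ * c ^ (-κ) = 1 := by rw [← Real.rpow_add hc, add_neg_cancel, Real.rpow_zero]
    calc (r ^ a * A ^ b) ^ 2 = r ^ (p₁ + p₂ + σ) * A ^ (α + (x - σ)) := by
          rw [mul_pow, ← Real.rpow_mul_natCast hr.le, ← Real.rpow_mul_natCast hA.le]
          congr 2 <;> simp only [σ, α] <;> push_cast <;> ring
      _ = _ := by
          rw [Real.rpow_add hr, Real.rpow_add hr, Real.rpow_add hA]
          linear_combination (r ^ p₁ * r ^ p₂ * r ^ σ * (A ^ α * A ^ (x - σ))) * hcc.symm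
  have hW : (r ^ a * A ^ b) ^ 2 ≤ (A ^ α * c ^ κ * r ^ p₁) * (t ^ x * c ^ (-κ) * r ^ p₂) := by
    rw [hsq]
    calc _ ≤ (A ^ α * c ^ κ * r ^ p₁) * (r ^ p₂ * c ^ (-κ)) * t ^ x := by
          gcongr
          exact rpow_mul_rpow_sub_le_rpow ht htr hA hAr hσx hx
      _ = _ := by ring
  have := two_mul_mul_mul_le_of_sq_le (by positivity) (by positivity) hF hG hW
  have : 0 ≤ r ^ a * A ^ b * F * G := by positivity
  linarith

theorem lintegral_lintegral_le_of_le_add {α β : Type*} [MeasurableSpace α] [MeasurableSpace β]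
    {μ : Measure α} {ν : Measure β} [SFinite μ] [SFinite ν]
    {W F G : α → β → ENNReal} {a Φ : α → ENNReal} {b Ψ : β → ENNReal}
    (hF : Measurable (uncurry F)) (hG : Measurable (uncurry G)) (hb : Measurable b)
    (hW : ∀ᵐ x ∂μ, ∀ᵐ y ∂ν, W x y ≤ a x * F x y + b y * G x y)
    (hΦ : ∀ᵐ x ∂μ, ∫⁻ y, F x y ∂ν ≤ Φ x) (hΨ : ∀ᵐ y ∂ν, ∫⁻ x, G x y ∂μ ≤ Ψ y) :
    ∫⁻ x, ∫⁻ y, W x y ∂ν ∂μ ≤ ∫⁻ x, a x * Φ x ∂μ + ∫⁻ y, b y * Ψ y ∂ν := by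
  have hbG : Measurable (uncurry fun x y => b y * G x y) := (hb.comp measurable_snd).mul hG
  calc ∫⁻ x, ∫⁻ y, W x y ∂ν ∂μ
      ≤ ∫⁻ x, ∫⁻ y, (a x * F x y + b y * G x y) ∂ν ∂μ :=
        lintegral_mono_ae (hW.mono fun x hx => lintegral_mono_ae hx)
    _ = ∫⁻ x, a x * ∫⁻ y, F x y ∂ν ∂μ + ∫⁻ y, b y * ∫⁻ x, G x y ∂μ ∂ν := by
        simp_rw [lintegral_add_left ((hF.of_uncurry_left).const_mul _),
          lintegral_const_mul _ hF.of_uncurry_left]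
        have hbG' : Measurable fun x => ∫⁻ y, b y * G x y ∂ν := hbG.lintegral_prod_right'
        rw [lintegral_add_right _ hbG', lintegral_lintegral_swap hbG.aemeasurable]
        simp_rw [lintegral_const_mul _ hG.of_uncurry_right]
    _ ≤ ∫⁻ x, a x * Φ x ∂μ + ∫⁻ y, b y * Ψ y ∂ν := by
        gcongr ?_ + ?_
        · exact lintegral_mono_ae (hΦ.mono fun x hx => by gcongr)
        · exact lintegral_mono_ae (hΨ.mono fun y hy => by gcongr)

theorem ofReal_add_abs_rpow_mul_sqrt_rpow_mul_mul_le {t u c a b p₁ p₂ x κ F G : ℝ} (ht : 1 ≤ t)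
    (hc : 0 < c) (hσx : 2 * a - p₁ - p₂ ≤ x) (hx : x ≤ 0) (hF : 0 ≤ F) (hG : 0 ≤ G) :
    ENNReal.ofReal ((t + |u|) ^ a * √(1 + u ^ 2) ^ b * F * G)
      ≤ ENNReal.ofReal (√(1 + u ^ 2) ^ (2 * b + 2 * a - p₁ - p₂ - x) * c ^ κ)
          * ENNReal.ofReal ((t + |u|) ^ p₁ * F ^ 2)
        + ENNReal.ofReal (t ^ x * c ^ (-κ)) * ENNReal.ofReal ((t + |u|) ^ p₂ * G ^ 2) := by
  have hr : 0 < t + |u| := by positivity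
  rw [← ENNReal.ofReal_mul (by positivity), ← ENNReal.ofReal_mul (by positivity),
    ← ENNReal.ofReal_add (by positivity) (by positivity)]
  exact ENNReal.ofReal_le_ofReal <| rpow_mul_rpow_mul_mul_le (by linarith)
    (le_add_of_nonneg_right (abs_nonneg u)) (by positivity) (sqrt_one_add_sq_le_add_abs ht u)
    hc hσx hx hF hG

theorem lintegral_Iic_ofReal_sqrt_rpow_mul_le {α β κ e ε u₀ : ℝ} (hαβ : α + β < -1)
    (he : κ + (α + β + 1) ≤ e) (hu₀ : u₀ ≤ 1) :
    ∫⁻ u in Iic u₀, ENNReal.ofReal (√(1 + u ^ 2) ^ α * √(1 + u₀ ^ 2) ^ κ)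
        * ENNReal.ofReal (ε ^ 2 * √(1 + u ^ 2) ^ β)
      ≤ ENNReal.ofReal (-4 ^ (-(α + β)) / (α + β + 1) * ε ^ 2 * √(1 + u₀ ^ 2) ^ e) := by
  set A₀ := √(1 + u₀ ^ 2)
  have hA₀ : 1 ≤ A₀ := one_le_sqrt_one_add_sq u₀
  have hC : 0 ≤ -4 ^ (-(α + β)) / (α + β + 1) :=
    div_nonneg_of_nonpos (neg_nonpos.2 (by positivity)) (by linarith)
  calc ∫⁻ u in Iic u₀, ENNReal.ofReal (√(1 + u ^ 2) ^ α * A₀ ^ κ)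
        * ENNReal.ofReal (ε ^ 2 * √(1 + u ^ 2) ^ β)
      = ∫⁻ u in Iic u₀, ENNReal.ofReal (ε ^ 2 * A₀ ^ κ)
          * ENNReal.ofReal (√(1 + u ^ 2) ^ (α + β)) := by
        refine lintegral_congr fun u => ?_
        rw [← ENNReal.ofReal_mul (by positivity), ← ENNReal.ofReal_mul (by positivity),
          Real.rpow_add (by positivity)]
        congr 1
        ring
    _ = ENNReal.ofReal (ε ^ 2 * A₀ ^ κ)
          * ∫⁻ u in Iic u₀, ENNReal.ofReal (√(1 + u ^ 2) ^ (α + β)) :=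
        lintegral_const_mul' _ _ ENNReal.ofReal_ne_top
    _ ≤ ENNReal.ofReal (ε ^ 2 * A₀ ^ κ)
          * ENNReal.ofReal (-4 ^ (-(α + β)) / (α + β + 1) * A₀ ^ (α + β + 1)) := by
        gcongr
        exact lintegral_Iic_sqrt_one_add_sq_rpow_le hαβ hu₀
    _ ≤ ENNReal.ofReal (-4 ^ (-(α + β)) / (α + β + 1) * ε ^ 2 * A₀ ^ e) := by
        rw [← ENNReal.ofReal_mul (by positivity)]
        refine ENNReal.ofReal_le_ofReal ?_
        have h : A₀ ^ κ * A₀ ^ (α + β + 1) ≤ A₀ ^ e := by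
          rw [← Real.rpow_add (by positivity)]
          exact Real.rpow_le_rpow_of_exponent_le hA₀ he
        calc ε ^ 2 * A₀ ^ κ * (-4 ^ (-(α + β)) / (α + β + 1) * A₀ ^ (α + β + 1))
            = -4 ^ (-(α + β)) / (α + β + 1) * ε ^ 2 * (A₀ ^ κ * A₀ ^ (α + β + 1)) := by ring
          _ ≤ _ := by gcongr

theorem lintegral_Icc_ofReal_rpow_mul_le {t₀ T x c κ β e ε : ℝ} (ht₀ : 0 < t₀) (hx : x < -1)
    (hc : 1 ≤ c) (he : -κ + β ≤ e) :
    ∫⁻ t in Icc t₀ T, ENNReal.ofReal (t ^ x * c ^ (-κ)) * ENNReal.ofReal (ε ^ 2 * c ^ β)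
      ≤ ENNReal.ofReal (-t₀ ^ (x + 1) / (x + 1) * ε ^ 2 * c ^ e) := by
  have hC : 0 ≤ -t₀ ^ (x + 1) / (x + 1) :=
    div_nonneg_of_nonpos (neg_nonpos.2 (by positivity)) (by linarith)
  have hce : c ^ (-κ) * c ^ β ≤ c ^ e := by
    rw [← Real.rpow_add (by positivity)]
    exact Real.rpow_le_rpow_of_exponent_le hc he
  calc ∫⁻ t in Icc t₀ T, ENNReal.ofReal (t ^ x * c ^ (-κ)) * ENNReal.ofReal (ε ^ 2 * c ^ β)
      ≤ ∫⁻ t in Ici t₀, ENNReal.ofReal (ε ^ 2 * c ^ e) * ENNReal.ofReal (t ^ x) := by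
        refine (lintegral_mono_set Icc_subset_Ici_self).trans
          (setLIntegral_mono' measurableSet_Ici fun t ht => ?_)
        have : 0 ≤ t ^ x := Real.rpow_nonneg (ht₀.trans_le ht).le x
        rw [← ENNReal.ofReal_mul (by positivity), ← ENNReal.ofReal_mul (by positivity)]
        refine ENNReal.ofReal_le_ofReal ?_
        calc t ^ x * c ^ (-κ) * (ε ^ 2 * c ^ β) = ε ^ 2 * (c ^ (-κ) * c ^ β) * t ^ x := by ring
          _ ≤ ε ^ 2 * c ^ e * t ^ x := by gcongr
    _ = ENNReal.ofReal (ε ^ 2 * c ^ e) * ENNReal.ofReal (-t₀ ^ (x + 1) / (x + 1)) := by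
        rw [lintegral_const_mul' _ _ ENNReal.ofReal_ne_top, lintegral_Ici_rpow_of_lt hx ht₀]
    _ = ENNReal.ofReal (-t₀ ^ (x + 1) / (x + 1) * ε ^ 2 * c ^ e) := by
        rw [← ENNReal.ofReal_mul (by positivity)]
        congr 1
        ring

theorem exterior_error_estimate_EF_general (s p p₁ p₂ ℓ : ℝ) (hs1 : 1 < s)
    (hp₁ : p₁ ≤ s)
    (hlt : 2 * p < p₁ + p₂ + ℓ) (hlt' : 2 * p + 1 < p₁ + p₂ + s) :
    ∃ C : ℝ, 0 < C ∧
      ∀ (ε T u₀ : ℝ), 0 ≤ ε → 2 ≤ T → u₀ ≤ 1 →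
      ∀ f g : ℝ → ℝ → ℝ,
        Measurable (Function.uncurry f) → Measurable (Function.uncurry g) →
        (∀ t ∈ Set.Icc (2:ℝ) T, ∀ u ≤ u₀, 0 ≤ f t u) →
        (∀ t ∈ Set.Icc (2:ℝ) T, ∀ u ≤ u₀, 0 ≤ g t u) →
        (∀ u ≤ u₀, ∫⁻ t in Set.Icc (2:ℝ) T,
            ENNReal.ofReal ((t + |u|) ^ p₁ * f t u ^ 2)
          ≤ ENNReal.ofReal (ε ^ 2 * Real.sqrt (1 + u ^ 2) ^ (p₁ - s))) →
        (∀ t ∈ Set.Icc (2:ℝ) T, ∫⁻ u in Set.Iic u₀,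
            ENNReal.ofReal ((t + |u|) ^ p₂ * g t u ^ 2)
          ≤ ENNReal.ofReal (ε ^ 2 * Real.sqrt (1 + u₀ ^ 2) ^ (p₂ - s))) →
        ∫⁻ u in Set.Iic u₀, ∫⁻ t in Set.Icc (2:ℝ) T,
            ENNReal.ofReal ((t + |u|) ^ (p - (ℓ + 1) / 2)
              * Real.sqrt (1 + u ^ 2) ^ (-((s - ℓ) / 2)) * f t u * g t u)
          ≤ ENNReal.ofReal (C * ε ^ 2 * Real.sqrt (1 + u₀ ^ 2) ^ (p - s)) := by
  -- `x` is the power of `t` in the weight of `g`: `x < -1` makes it integrable in `t`,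
  -- `2p - p₁ - p₂ - ℓ - 1 < x` lets `⟨u⟩ ≤ r` and `t ≤ r` bound that weight by `t^x`,
  -- `2p - p₂ - 2s < x` makes the weight of `f` integrable in `u`, and `-s < x` caps the
  -- resulting power of `⟨u₀⟩` at `p - s`.
  obtain ⟨x, hx, hx₁⟩ : ∃ x,
      max (max (-s) (2 * p - p₁ - p₂ - ℓ - 1)) (2 * p - p₂ - 2 * s) < x ∧ x < -1 :=
    exists_between (max_lt (max_lt (by linarith) (by linarith)) (by linarith))
  simp only [max_lt_iff] at hx
  obtain ⟨⟨hxs, hxσ⟩, hxq⟩ := hx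
  set α := 2 * -((s - ℓ) / 2) + 2 * (p - (ℓ + 1) / 2) - p₁ - p₂ - x with hα
  have hαβ : α + (p₁ - s) < -1 := by rw [hα]; linarith
  have hC₁ : 0 < -4 ^ (-(α + (p₁ - s))) / (α + (p₁ - s) + 1) :=
    div_pos_of_neg_of_neg (neg_neg_of_pos (by positivity)) (by linarith)
  have hC₂ : 0 < -2 ^ (x + 1) / (x + 1) :=
    div_pos_of_neg_of_neg (neg_neg_of_pos (by positivity)) (by linarith)
  refine ⟨_ + _, add_pos hC₁ hC₂, ?_⟩
  intro ε T u₀ hε hT hu₀ f g hf hg hf0 hg0 hfflux hgflux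
  have hf' : Measurable fun z : ℝ × ℝ => f z.2 z.1 := hf.comp measurable_swap
  have hg' : Measurable fun z : ℝ × ℝ => g z.2 z.1 := hg.comp measurable_swap
  refine (lintegral_lintegral_le_of_le_add (by fun_prop) (by fun_prop) (by fun_prop)
    (ae_restrict_of_forall_mem measurableSet_Iic fun u hu =>
      ae_restrict_of_forall_mem measurableSet_Icc fun t ht =>
        ofReal_add_abs_rpow_mul_sqrt_rpow_mul_mul_le (t := t) (u := u) (c := √(1 + u₀ ^ 2))
          (p₁ := p₁) (p₂ := p₂) (x := x) (κ := p₂ - p) (by linarith [ht.1]) (by positivity)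
          (by linarith) (by linarith) (hf0 t ht u hu) (hg0 t ht u hu))
    (ae_restrict_of_forall_mem measurableSet_Iic hfflux)
    (ae_restrict_of_forall_mem measurableSet_Icc hgflux)).trans ?_
  refine (add_le_add
    (lintegral_Iic_ofReal_sqrt_rpow_mul_le (e := p - s) hαβ (by rw [hα]; linarith) hu₀)
    (lintegral_Icc_ofReal_rpow_mul_le (e := p - s) two_pos hx₁ (one_le_sqrt_one_add_sq u₀)
      (by linarith))).trans_eq ?_
  rw [← ENNReal.ofReal_add (by positivity) (by positivity), add_mul, add_mul]

/-- Flat model of the exterior-region mixed nonlinear error estimate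
(case (2) of the Appendix theorem). With `⟨u⟩ = √(1+u²)`, `r(t,u) = t+|u|`:
if for every `u ≤ u₀` the null-cone flux of `f` satisfies
`∫_2^T r^{p₁} f² dt ≤ ε²⟨u⟩^{p₁−s}`, and for every `t ∈ [2,T]` the hypersurface
flux of `g` satisfies `∫_{−∞}^{u₀} r^{p₂} g² du ≤ ε²⟨u₀⟩^{p₂−s}`, then
`∫_{−∞}^{u₀} ∫_2^T r^{p−(ℓ+1)/2} ⟨u⟩^{−(s−ℓ)/2} f g dt du ≤ C ε² ⟨u₀⟩^{p−s}`,
with `C` depending only on `s, p, p₁, p₂, ℓ`, provided `2p < p₁+p₂+ℓ` and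
`2p+1 < p₁+p₂+s`. -/
theorem exterior_error_estimate_EF (s p p₁ p₂ ℓ : ℝ) (hs1 : 1 < s) (hs2 : s ≤ 2)
    (hp : p ≤ s) (hp₁ : p₁ ≤ s) (hp₂ : p₂ ≤ s) (hℓ : ℓ ≤ s)
    (hlt : 2 * p < p₁ + p₂ + ℓ) (hlt' : 2 * p + 1 < p₁ + p₂ + s) :
    ∃ C : ℝ, 0 < C ∧
      ∀ (ε T u₀ : ℝ), 0 ≤ ε → 2 ≤ T → u₀ ≤ 1 →
      ∀ f g : ℝ → ℝ → ℝ,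
        Measurable (Function.uncurry f) → Measurable (Function.uncurry g) →
        (∀ t ∈ Set.Icc (2:ℝ) T, ∀ u ≤ u₀, 0 ≤ f t u) →
        (∀ t ∈ Set.Icc (2:ℝ) T, ∀ u ≤ u₀, 0 ≤ g t u) →
        (∀ u ≤ u₀, ∫⁻ t in Set.Icc (2:ℝ) T,
            ENNReal.ofReal ((t + |u|) ^ p₁ * f t u ^ 2)
          ≤ ENNReal.ofReal (ε ^ 2 * Real.sqrt (1 + u ^ 2) ^ (p₁ - s))) →
        (∀ t ∈ Set.Icc (2:ℝ) T, ∫⁻ u in Set.Iic u₀,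
            ENNReal.ofReal ((t + |u|) ^ p₂ * g t u ^ 2)
          ≤ ENNReal.ofReal (ε ^ 2 * Real.sqrt (1 + u₀ ^ 2) ^ (p₂ - s))) →
        ∫⁻ u in Set.Iic u₀, ∫⁻ t in Set.Icc (2:ℝ) T,
            ENNReal.ofReal ((t + |u|) ^ (p - (ℓ + 1) / 2)
              * Real.sqrt (1 + u ^ 2) ^ (-((s - ℓ) / 2)) * f t u * g t u)
          ≤ ENNReal.ofReal (C * ε ^ 2 * Real.sqrt (1 + u₀ ^ 2) ^ (p - s)) :=
  exterior_error_estimate_EF_general s p p₁ p₂ ℓ hs1 hp₁ hlt hlt'
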